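/- arXiv:2510.07860 — 5 statements merged into one kernel-verified Lean document; each statement's English description precedes it below -/
import Mathlib

section
/- Let (V, d) be a metric space, C ⊆ V finite, and suppose nonnegative values C(v) for v ∈ C are given. Suppose R ⊆ C and a partition {child(j)}_{j ∈ R} of C are such that every v ∈ child(j) satisfies d(v, j) ≤ 4·C(v). Then for any S ⊆ V and α ≥ 0 satisfying ∑_{j ∈ R} |child(j)| · d(j, S) ≤ α · ∑_{v ∈ C} C(v), we have ∑_{v ∈ C} d(v, S) ≤ (4 + α) · ∑_{v ∈ C} C(v). -/
open Finset Metric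

/-- Filtering lemma: if every client `v` is within `4·cost v` of its
representative, and the weighted cost of the representatives w.r.t. `S` is at
most `α` times the total fractional cost, then the total assignment cost of all
clients to `S` is at most `(4 + α)` times the total fractional cost. -/
theorem filtering_cost_bound
    {V : Type*} [MetricSpace V] [DecidableEq V] (C R : Finset V) (child : V → Finset V)
    (cost : V → ℝ) (hcost : ∀ v ∈ C, 0 ≤ cost v)
    (hRC : R ⊆ C)
    (hchild_sub : ∀ j ∈ R, child j ⊆ C)
    (hcover : C = R.biUnion child)
    (hdisj : ∀ j ∈ R, ∀ j' ∈ R, j ≠ j' → Disjoint (child j) (child j'))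
    (hclose : ∀ j ∈ R, ∀ v ∈ child j, dist v j ≤ 4 * cost v)
    (S : Set V) (α : ℝ) (hα : 0 ≤ α)
    (hS : ∑ j ∈ R, ((child j).card : ℝ) * infDist j S ≤ α * ∑ v ∈ C, cost v) :
    ∑ v ∈ C, infDist v S ≤ (4 + α) * ∑ v ∈ C, cost v := by
  have hsplit : ∀ f : V → ℝ, ∑ v ∈ C, f v = ∑ j ∈ R, ∑ v ∈ child j, f v := by
    intro f
    rw [hcover, Finset.sum_biUnion]
    intro j hj j' hj' hne
    exact hdisj j hj j' hj' hne
  have key : ∑ v ∈ C, infDist v S ≤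
      (∑ j ∈ R, ((child j).card : ℝ) * infDist j S) + 4 * ∑ v ∈ C, cost v := by
    rw [hsplit (fun v => infDist v S), hsplit cost, Finset.mul_sum, ← Finset.sum_add_distrib]
    apply Finset.sum_le_sum
    intro j hj
    have : ∑ v ∈ child j, infDist v S ≤
        ∑ v ∈ child j, (infDist j S + 4 * cost v) := by
      apply Finset.sum_le_sum
      intro v hv
      calc infDist v S ≤ infDist j S + dist v j := infDist_le_infDist_add_dist
        _ ≤ infDist j S + 4 * cost v := by
            linarith [hclose j hj v hv]
    calc ∑ v ∈ child j, infDist v S ≤ ∑ v ∈ child j, (infDist j S + 4 * cost v) := this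
      _ = ((child j).card : ℝ) * infDist j S + 4 * ∑ v ∈ child j, cost v := by
          rw [Finset.sum_add_distrib, Finset.sum_const, Finset.mul_sum, nsmul_eq_mul]
  have : ∑ v ∈ C, infDist v S ≤ α * ∑ v ∈ C, cost v + 4 * ∑ v ∈ C, cost v := by
    linarith
  linarith
end

section
/- Let (V, d) be a metric space, C ⊆ V, and suppose to each j in a subset Reps ⊆ C is associated a value C(j) ≥ 0 such that any two distinct j, j' ∈ Reps satisfy d(j, j') > 4·max{C(j), C(j')}. Fix j ∈ Reps, let F_j = {i ∈ F : d(i,j) = min_{j' ∈ Reps} d(i, j')} (ties broken by some fixed rule), let γ_j = min_{i ∉ F_j} d(i, j), and suppose γ_j = d(i_γ, j) with i_γ ∈ F_ℓ for some ℓ ∈ Reps, ℓ ≠ j. Then: (a) 2γ_j ≥ d(j, ℓ), and (b) for every facility i with d(i, ℓ) ≤ 2·C(ℓ), we have d(i, j) ≤ 3γ_j. -/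
open Finset

/-- Voronoi-cell geometry around well-separated representatives
(Fact "swamy", parts (a) and (b)). `cell` assigns each facility its closest
representative (the tie-breaking rule), `γ = d(i_γ, j)` is the distance from `j`
to the closest facility outside `j`'s cell, and `i_γ` lies in the cell of `ℓ`. -/
theorem voronoi_separation_bounds
    {V : Type*} [MetricSpace V]
    (F Reps : Finset V) (cost : V → ℝ)
    (hcost : ∀ j ∈ Reps, 0 ≤ cost j)
    (hsep : ∀ j ∈ Reps, ∀ j' ∈ Reps, j ≠ j' →
      dist j j' > 4 * max (cost j) (cost j'))
    (cell : V → V)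
    (hcell_mem : ∀ i ∈ F, cell i ∈ Reps)
    (hcell_min : ∀ i ∈ F, ∀ j' ∈ Reps, dist i (cell i) ≤ dist i j')
    (j : V) (hj : j ∈ Reps) (ℓ : V) (hℓ : ℓ ∈ Reps) (hjℓ : ℓ ≠ j)
    (γ : ℝ) (iγ : V) (hiγF : iγ ∈ F) (hiγcell : cell iγ = ℓ)
    (hγ : γ = dist iγ j)
    (hγmin : ∀ i ∈ F, cell i ≠ j → γ ≤ dist i j) :
    dist j ℓ ≤ 2 * γ ∧
    ∀ i ∈ F, dist i ℓ ≤ 2 * cost ℓ → dist i j ≤ 3 * γ := by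
  have hmin := hcell_min iγ hiγF j hj
  rw [hiγcell] at hmin
  have ha : dist j ℓ ≤ 2 * γ := by
    calc dist j ℓ ≤ dist j iγ + dist iγ ℓ := dist_triangle _ _ _
      _ ≤ dist j iγ + dist iγ j := by linarith [hmin]
      _ = 2 * γ := by rw [hγ, dist_comm j iγ]; ring
  refine ⟨ha, fun i hiF hi => ?_⟩
  have hsep' := hsep j hj ℓ hℓ (Ne.symm hjℓ)
  have hle : cost ℓ ≤ max (cost j) (cost ℓ) := le_max_right _ _
  calc dist i j ≤ dist i ℓ + dist ℓ j := dist_triangle _ _ _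
    _ ≤ 2 * cost ℓ + dist ℓ j := by linarith
    _ ≤ (1/2) * dist j ℓ + dist j ℓ := by rw [dist_comm ℓ j]; linarith
    _ = (3/2) * dist j ℓ := by ring
    _ ≤ 3 * γ := by linarith
end

section
/- Let (V, d) be a metric space with facility set F and client set C, let opt ≥ 0, and suppose R ⊆ C is a set of 'representatives' such that (i) for every v ∈ C there exists j ∈ R with d(v, j) ≤ 2·opt, and (ii) for every j ∈ R the set B(j, opt) ∩ F is nonempty. If A ⊆ F intersects B(j, opt) ∩ F for every j ∈ R, then max_{v ∈ C} d(v, A) ≤ 3·opt. -/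
open Metric

/-- Hochbaum–Shmoys triangle-inequality step: if every client is within `2·opt`
of a representative, every representative has a facility within `opt`, and `A`
hits the `opt`-ball (in `F`) of every representative, then every client is
within `3·opt` of `A`. -/
theorem hochbaum_shmoys_three_approx
    {V : Type*} [MetricSpace V] (F C R : Set V) (opt : ℝ) (hopt : 0 ≤ opt)
    (hRC : R ⊆ C)
    (hrep : ∀ v ∈ C, ∃ j ∈ R, dist v j ≤ 2 * opt)
    (hball : ∀ j ∈ R, ∃ i ∈ F, dist j i ≤ opt)
    (A : Set V) (hA : A ⊆ F)
    (hhit : ∀ j ∈ R, ∃ a ∈ A, a ∈ F ∧ dist j a ≤ opt) :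
    ∀ v ∈ C, infDist v A ≤ 3 * opt := by
  intro v hv
  obtain ⟨j, hjR, hvj⟩ := hrep v hv
  obtain ⟨a, haA, _, hja⟩ := hhit j hjR
  calc infDist v A ≤ dist v a := infDist_le_dist_of_mem haA
    _ ≤ dist v j + dist j a := dist_triangle v j a
    _ ≤ 2 * opt + opt := add_le_add hvj hja
    _ = 3 * opt := by ring
end

section
/- Let V be a finite metric space under each of T metrics d₁,…,d_T, let F ⊆ V be facilities and C ⊆ V clients. Suppose for each t ∈ [T] and i ∈ [k] we are given a point ℓ_{i,t} ∈ C and a radius r_{i,t} ≥ 0, and suppose there exist points o₁,…,o_k ∈ F such that d_t(o_i, ℓ_{i,t}) ≤ r_{i,t} for all i, t, and such that for every t and every v ∈ C, if o_i is a d_t-closest point of {o₁,…,o_k} to v then r_{i,t} ≤ d_t(v, o_i). For each i, pick any f_i ∈ F with d_t(f_i, ℓ_{i,t}) ≤ (1+ε)·r_{i,t} for all t ∈ [T] (such f_i exists since o_i qualifies). Then for every t ∈ [T] and every v ∈ C, d_t(v, {f₁,…,f_k}) ≤ (3 + 2ε) · d_t(v, {o₁,…,o_k}). -/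
/-- Correctness core of the FPT(k,T) `(3+ε)`-approximation: if `ℓ i t` is a
closest client to the unknown optimal center `o i` under metric `d t` with
`d t (o i) (ℓ i t) ≤ r i t`, the radii lower-bound distances of clients to their
closest optimal center, and `f i` satisfies `d t (f i) (ℓ i t) ≤ (1+ε)·r i t`
for all `t`, then for every metric `t` and client `v`, the distance of `v` to
the chosen centers is at most `(3 + 2ε)` times its optimal distance. -/
theorem fpt_three_eps_approx
    {V : Type*} (T k : ℕ) (hk : 0 < k)
    (d : Fin T → V → V → ℝ)
    (hd_nonneg : ∀ t x y, 0 ≤ d t x y)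
    (hd_symm : ∀ t x y, d t x y = d t y x)
    (hd_tri : ∀ t x y z, d t x z ≤ d t x y + d t y z)
    (F C : Set V)
    (ℓ : Fin k → Fin T → V) (hℓ : ∀ i t, ℓ i t ∈ C)
    (r : Fin k → Fin T → ℝ) (hr0 : ∀ i t, 0 ≤ r i t)
    (o : Fin k → V) (ho : ∀ i, o i ∈ F)
    (hor : ∀ i t, d t (o i) (ℓ i t) ≤ r i t)
    (hclosest : ∀ t, ∀ v ∈ C, ∀ i : Fin k,
      (∀ i' : Fin k, d t v (o i) ≤ d t v (o i')) → r i t ≤ d t v (o i))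
    (ε : ℝ) (hε : 0 ≤ ε)
    (f : Fin k → V) (hf : ∀ i, f i ∈ F)
    (hfr : ∀ i t, d t (f i) (ℓ i t) ≤ (1 + ε) * r i t) :
    ∀ t : Fin T, ∀ v ∈ C, ∃ i : Fin k, ∀ i' : Fin k,
      d t v (f i) ≤ (3 + 2 * ε) * d t v (o i') := by
  intro t v hv
  haveI : Nonempty (Fin k) := ⟨⟨0, hk⟩⟩
  obtain ⟨i, hmin⟩ := Finite.exists_min (fun i : Fin k => d t v (o i))
  refine ⟨i, fun i' => ?_⟩
  have hri : r i t ≤ d t v (o i) := hclosest t v hv i hmin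
  have h1 : d t v (f i) ≤ d t v (o i) + d t (o i) (ℓ i t) + d t (ℓ i t) (f i) := by
    calc d t v (f i) ≤ d t v (ℓ i t) + d t (ℓ i t) (f i) := hd_tri t v (ℓ i t) (f i)
      _ ≤ d t v (o i) + d t (o i) (ℓ i t) + d t (ℓ i t) (f i) := by
          have := hd_tri t v (o i) (ℓ i t); linarith
  have h2 : d t (ℓ i t) (f i) ≤ (1 + ε) * r i t := by
    rw [hd_symm]; exact hfr i t
  have h3 : d t v (f i) ≤ (3 + 2 * ε) * d t v (o i) := by
    have := hor i t
    nlinarith [hd_nonneg t v (o i)]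
  have h4 : d t v (o i) ≤ d t v (o i') := hmin i'
  nlinarith [hd_nonneg t v (o i')]
end

section
/- Let F be a finite set and let ŷ : F → {0, 1/2} be a half-integral weight function. Let j, ℓ be two clients in a metric d with: S_j = {p, s} and S_ℓ two-element subsets of F with ŷ-mass 1 each (so each element has weight 1/2), where d(p, j) ≤ d(s, j); define Ĉ(j) = (1/2)(d(p,j) + d(s,j)) and Ĉ(ℓ) = (1/2)·∑_{i ∈ S_ℓ} d(i, ℓ), and assume Ĉ(ℓ) ≤ Ĉ(j) and S_j ∩ S_ℓ ≠ ∅. Define A(ŷ, j) = ∑_{i ∈ S_ℓ} d(i, j)·ŷ(i) if p ∈ S_ℓ, and A(ŷ, j) = ∑_{i ∈ S_ℓ} d(i, j)·ŷ(i) + (d(p,j) − d(s,j))·ŷ(p) otherwise. Then A(ŷ, j) ≤ 2·Ĉ(j). (In the second case one additionally assumes s ∈ S_ℓ, which holds since S_j ∩ S_ℓ ≠ ∅ and p ∉ S_ℓ.) -/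
open Finset

/-- Lemma "A-upper-bd" (integral rounding phase, `T = 2` aggregate `k`-median):
the proxy cost `A(ŷ, j)` of a representative `j` relative to the
super-representative `ℓ` is at most `2·Ĉ(j)`. -/
theorem A_upper_bound
    {V : Type*} [MetricSpace V] [DecidableEq V]
    (yhat : V → ℝ) (hyhat : ∀ i, yhat i = 0 ∨ yhat i = 1 / 2)
    (j ℓ p s : V) (hps : p ≠ s)
    (Sl : Finset V) (hSl : Sl.card = 2)
    (hySl : ∀ i ∈ Sl, yhat i = 1 / 2)
    (hyp : yhat p = 1 / 2) (hys : yhat s = 1 / 2)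
    (hclose : dist p j ≤ dist s j)
    (Cj Cl : ℝ)
    (hCj : Cj = (dist p j + dist s j) / 2)
    (hCl : Cl = (1 / 2) * ∑ i ∈ Sl, dist i ℓ)
    (hCC : Cl ≤ Cj)
    (hshare : (({p, s} : Finset V) ∩ Sl).Nonempty)
    (A : ℝ)
    (hA : A = if p ∈ Sl then ∑ i ∈ Sl, dist i j * yhat i
      else (∑ i ∈ Sl, dist i j * yhat i) + (dist p j - dist s j) * yhat p) :
    A ≤ 2 * Cj := by
  obtain ⟨a, b, hab, rfl⟩ := Finset.card_eq_two.mp hSl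
  have hya : yhat a = 1 / 2 := hySl a (by simp)
  have hyb : yhat b = 1 / 2 := hySl b (by simp)
  rw [Finset.sum_pair hab] at hCl hA
  by_cases hp : p ∈ ({a, b} : Finset V)
  · rw [if_pos hp] at hA
    rcases Finset.mem_insert.mp hp with rfl | h
    · have t : dist b j ≤ dist b ℓ + dist ℓ p + dist p j := dist_triangle4 b ℓ p j
      have hc : dist ℓ p = dist p ℓ := dist_comm ℓ p
      rw [hya, hyb] at hA
      linarith
    · have hb : p = b := Finset.mem_singleton.mp h
      subst hb
      have t : dist a j ≤ dist a ℓ + dist ℓ p + dist p j := dist_triangle4 a ℓ p j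
      have hc : dist ℓ p = dist p ℓ := dist_comm ℓ p
      rw [hya, hyb] at hA
      linarith
  · rw [if_neg hp] at hA
    have hs : s ∈ ({a, b} : Finset V) := by
      obtain ⟨q, hq⟩ := hshare
      rw [Finset.mem_inter] at hq
      rcases Finset.mem_insert.mp hq.1 with rfl | hq2
      · exact absurd hq.2 hp
      · obtain rfl := Finset.mem_singleton.mp hq2
        exact hq.2
    rcases Finset.mem_insert.mp hs with rfl | h
    · have t : dist b j ≤ dist b ℓ + dist ℓ s + dist s j := dist_triangle4 b ℓ s j
      have hc : dist ℓ s = dist s ℓ := dist_comm ℓ s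
      rw [hya, hyb, hyp] at hA
      linarith
    · have hb : s = b := Finset.mem_singleton.mp h
      subst hb
      have t : dist a j ≤ dist a ℓ + dist ℓ s + dist s j := dist_triangle4 a ℓ s j
      have hc : dist ℓ s = dist s ℓ := dist_comm ℓ s
      rw [hya, hyb, hyp] at hA
      linarith
end
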